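/- arXiv:2303.07866 — 2 statements merged into one kernel-verified Lean document; each statement's English description precedes it below -/
import Mathlib

section
/- The function ŷ(ẑ) = ẑ·e^{ẑ²/2}·(c₂ - c₁·√(π/2)·erf(ẑ/√2)), for any constants c₁, c₂, satisfies the linear ODE (1/ẑ)·ŷ'' - (1 + 2/ẑ²)·ŷ' + (2/ẑ³)·ŷ = 0 for all ẑ ≠ 0. -/
open Complex

/-- The error function extended to complex arguments,
`erf(w) = (2/√π) ∫₀¹ w·exp(-(t·w)²) dt`. -/
noncomputable def cerf (w : ℂ) : ℂ :=
  (2 / Real.sqrt Real.pi) * ∫ t in (0:ℝ)..1, w * Complex.exp (-((t : ℂ) * w)^2)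

open MeasureTheory Metric intervalIntegral in
lemma hasDerivAt_inner_integral (w : ℂ) :
    HasDerivAt (fun x : ℂ => ∫ t in (0:ℝ)..1, x * Complex.exp (-((t : ℂ) * x)^2))
      (Complex.exp (-w^2)) w := by
  set F : ℂ → ℝ → ℂ := fun x t => x * Complex.exp (-((t : ℂ) * x)^2) with hF
  set F' : ℂ → ℝ → ℂ := fun x t => Complex.exp (-((t : ℂ) * x)^2) * (1 - 2*(t:ℂ)^2*x^2)
    with hF'
  have norm_le : ∀ x ∈ ball w 1, ‖x‖ ≤ ‖w‖ + 1 := by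
    intro x hx
    have := mem_ball_iff_norm.mp hx
    calc ‖x‖ = ‖w + (x - w)‖ := by ring_nf
    _ ≤ ‖w‖ + ‖x - w‖ := norm_add_le _ _
    _ ≤ ‖w‖ + 1 := by linarith
  have hdiff : ∀ (t : ℝ) (x : ℂ), HasDerivAt (fun x => F x t) (F' x t) x := by
    intro t x
    have h0 : HasDerivAt (fun x : ℂ => (t:ℂ) * x) (t:ℂ) x := by
      simpa using (hasDerivAt_id x).const_mul (t:ℂ)
    have h1 : HasDerivAt (fun x : ℂ => Complex.exp (-((t:ℂ)*x)^2))
        (Complex.exp (-((t:ℂ)*x)^2) * (-(2*((t:ℂ)*x)^1*(t:ℂ)))) x :=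
      ((h0.pow 2).neg).cexp
    have := (hasDerivAt_id x).mul h1
    refine this.congr_deriv ?_
    simp only [hF', id_eq]
    ring
  have hbound : ∀ (t : ℝ), t ∈ Set.uIoc (0:ℝ) 1 → ∀ x ∈ ball w 1,
      ‖F' x t‖ ≤ Real.exp ((‖w‖+1)^2) * (1 + 2*(‖w‖+1)^2) := by
    intro t ht x hx
    have ht' : t ∈ Set.Ioc (0:ℝ) 1 := by rwa [Set.uIoc_of_le zero_le_one] at ht
    have ht0 : 0 ≤ t := le_of_lt ht'.1
    have ht1 : t ≤ 1 := ht'.2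
    have hxw : ‖x‖ ≤ ‖w‖ + 1 := norm_le x hx
    have hx0 : (0:ℝ) ≤ ‖x‖ := norm_nonneg x
    have htsq : t^2 ≤ 1 := by nlinarith
    have ht2 : (0:ℝ) ≤ t^2 := sq_nonneg t
    have hxsq : ‖x‖^2 ≤ (‖w‖+1)^2 := by nlinarith
    have hexp : ‖Complex.exp (-((t:ℂ)*x)^2)‖ ≤ Real.exp ((‖w‖+1)^2) := by
      rw [Complex.norm_exp]
      apply Real.exp_le_exp.mpr
      have : (-((t:ℂ)*x)^2).re ≤ ‖(-((t:ℂ)*x)^2)‖ := by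
        exact Complex.re_le_norm _
      refine this.trans ?_
      rw [norm_neg, norm_pow, norm_mul, Complex.norm_real, Real.norm_eq_abs,
        _root_.abs_of_nonneg ht0]
      calc (t * ‖x‖)^2 ≤ (1 * (‖w‖+1))^2 := by
            apply sq_le_sq'
            · nlinarith
            · nlinarith
      _ = (‖w‖+1)^2 := by ring
    have hpoly : ‖(1:ℂ) - 2*(t:ℂ)^2*x^2‖ ≤ 1 + 2*(‖w‖+1)^2 := by
      calc ‖(1:ℂ) - 2*(t:ℂ)^2*x^2‖ ≤ ‖(1:ℂ)‖ + ‖2*(t:ℂ)^2*x^2‖ := norm_sub_le _ _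
      _ = 1 + 2 * t^2 * ‖x‖^2 := by
          simp [norm_mul, norm_pow, Complex.norm_real, _root_.abs_of_nonneg ht0]
      _ ≤ 1 + 2*(‖w‖+1)^2 := by nlinarith
    calc ‖F' x t‖ = ‖Complex.exp (-((t:ℂ)*x)^2)‖ * ‖(1:ℂ) - 2*(t:ℂ)^2*x^2‖ := norm_mul _ _
    _ ≤ Real.exp ((‖w‖+1)^2) * (1 + 2*(‖w‖+1)^2) := by
        apply mul_le_mul hexp hpoly (norm_nonneg _)
        positivity
  have cont : ∀ x : ℂ, Continuous (fun t : ℝ => F x t) := by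
    intro x
    apply Continuous.mul continuous_const
    exact Complex.continuous_exp.comp (by fun_prop)
  have contF' : Continuous (fun t : ℝ => F' w t) := by
    apply Continuous.mul
    · exact Complex.continuous_exp.comp (by fun_prop)
    · fun_prop
  have main := hasDerivAt_integral_of_dominated_loc_of_deriv_le (F := F) (F' := F')
    (x₀ := w) (a := 0) (b := 1) (μ := volume)
    (bound := fun _ => Real.exp ((‖w‖+1)^2) * (1 + 2*(‖w‖+1)^2)) (ball_mem_nhds w one_pos)
    (Filter.Eventually.of_forall fun x => ((cont x).aestronglyMeasurable).restrict)
    ((cont w).intervalIntegrable 0 1)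
    (contF'.aestronglyMeasurable.restrict)
    (ae_of_all _ hbound)
    (intervalIntegrable_const)
    (ae_of_all _ fun t _ x _ => hdiff t x)
  have hval : (∫ t in (0:ℝ)..1, F' w t) = Complex.exp (-w^2) := by
    have : ∀ t ∈ Set.uIcc (0:ℝ) 1, HasDerivAt (fun t : ℝ => (t:ℂ) * Complex.exp (-((t:ℂ)*w)^2))
        (F' w t) t := by
      intro t _
      have hre : HasDerivAt (fun t : ℝ => (t:ℂ)) 1 t := by
        exact (hasDerivAt_id t).ofReal_comp
      have h0 : HasDerivAt (fun t : ℝ => (t:ℂ) * w) w t := by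
        simpa using hre.mul_const w
      have hg : HasDerivAt (fun u : ℂ => Complex.exp (-u^2))
          (Complex.exp (-((t:ℂ)*w)^2) * (-(2*((t:ℂ)*w)^1*1))) ((t:ℂ)*w) :=
        (((hasDerivAt_id ((t:ℂ)*w)).pow 2).neg).cexp
      have h1 : HasDerivAt (fun t : ℝ => Complex.exp (-((t:ℂ)*w)^2))
          (Complex.exp (-((t:ℂ)*w)^2) * (-(2*((t:ℂ)*w)^1*1)) * w) t := HasDerivAt.comp (h₂ := fun u : ℂ => Complex.exp (-u^2)) t hg h0
      have := hre.mul h1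
      refine this.congr_deriv ?_
      simp only [hF', id_eq]
      ring
    rw [intervalIntegral.integral_eq_sub_of_hasDerivAt this (contF'.intervalIntegrable 0 1)]
    norm_num
  rw [← hval]
  exact main.2

lemma hasDerivAt_cerf (w : ℂ) :
    HasDerivAt cerf ((2 / ((Real.sqrt Real.pi : ℝ) : ℂ)) * Complex.exp (-w^2)) w := by
  unfold cerf
  exact (hasDerivAt_inner_integral w).const_mul _

lemma const_simp : ((Real.sqrt (Real.pi / 2) : ℝ) : ℂ) *
    ((2 / ((Real.sqrt Real.pi : ℝ) : ℂ)) / ((Real.sqrt 2 : ℝ) : ℂ)) = 1 := by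
  have hπ : (0:ℝ) < Real.sqrt Real.pi := Real.sqrt_pos.mpr Real.pi_pos
  have h2 : (0:ℝ) < Real.sqrt 2 := by positivity
  have key : Real.sqrt (Real.pi / 2) * ((2 / Real.sqrt Real.pi) / Real.sqrt 2) = 1 := by
    rw [Real.sqrt_div Real.pi_pos.le]
    have h22 : Real.sqrt 2 * Real.sqrt 2 = 2 := Real.mul_self_sqrt (by norm_num)
    field_simp
    nlinarith
  calc ((Real.sqrt (Real.pi / 2) : ℝ) : ℂ) *
      ((2 / ((Real.sqrt Real.pi : ℝ) : ℂ)) / ((Real.sqrt 2 : ℝ) : ℂ))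
      = ((Real.sqrt (Real.pi / 2) * ((2 / Real.sqrt Real.pi) / Real.sqrt 2) : ℝ) : ℂ) := by
        push_cast; ring
  _ = 1 := by rw [key]; norm_num

theorem stmt_9 (c₁ c₂ : ℂ) :
    let yh : ℂ → ℂ := fun zh =>
      zh * Complex.exp (zh^2 / 2) *
        (c₂ - c₁ * (Real.sqrt (Real.pi / 2) : ℝ) * cerf (zh / (Real.sqrt 2 : ℝ)))
    ∀ zh : ℂ, zh ≠ 0 →
      (1 / zh) * deriv (deriv yh) zh - (1 + 2 / zh^2) * deriv yh zh + (2 / zh^3) * yh zh = 0 := by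
  intro yh zh hz
  have hs2 : ((Real.sqrt 2 : ℝ) : ℂ) ≠ 0 := by
    simp [Real.sqrt_eq_zero']
  have hsq2 : ((Real.sqrt 2 : ℝ) : ℂ)^2 = 2 := by
    rw [← Complex.ofReal_pow, Real.sq_sqrt (by norm_num : (0:ℝ) ≤ 2)]
    norm_num
  set C : ℂ → ℂ := fun z => c₂ - c₁ * (Real.sqrt (Real.pi / 2) : ℝ) * cerf (z / (Real.sqrt 2 : ℝ))
    with hC
  -- derivative of C
  have hCd : ∀ z : ℂ, HasDerivAt C (-c₁ * Complex.exp (-z^2/2)) z := by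
    intro z
    have hcomp : HasDerivAt (fun z : ℂ => cerf (z / (Real.sqrt 2 : ℝ)))
        (((2 / ((Real.sqrt Real.pi : ℝ) : ℂ)) * Complex.exp (-(z / (Real.sqrt 2 : ℝ))^2)) /
          ((Real.sqrt 2 : ℝ) : ℂ)) z := by
      have hi : HasDerivAt (fun z : ℂ => z / ((Real.sqrt 2 : ℝ) : ℂ))
          (1 / ((Real.sqrt 2 : ℝ) : ℂ)) z := (hasDerivAt_id z).div_const _
      have := (hasDerivAt_cerf (z / ((Real.sqrt 2 : ℝ) : ℂ))).comp z hi
      refine this.congr_deriv ?_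
      field_simp
    have hzz : -(z / ((Real.sqrt 2 : ℝ) : ℂ))^2 = -z^2/2 := by
      rw [div_pow, hsq2]; ring
    rw [hzz] at hcomp
    have := ((hcomp.const_mul (c₁ * (Real.sqrt (Real.pi / 2) : ℝ))).const_sub c₂)
    refine this.congr_deriv ?_
    linear_combination (-(c₁ * Complex.exp (-z^2/2))) * const_simp
  have hE : ∀ z : ℂ, HasDerivAt (fun z : ℂ => Complex.exp (z^2/2))
      (z * Complex.exp (z^2/2)) z := by
    intro z
    have h0 : HasDerivAt (fun z : ℂ => z^2/2) z z := by
      simpa using ((hasDerivAt_pow 2 z).div_const 2)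
    have := h0.cexp
    refine this.congr_deriv ?_
    ring
  have hEE : ∀ z : ℂ, Complex.exp (z^2/2) * Complex.exp (-z^2/2) = 1 := by
    intro z
    rw [← Complex.exp_add]
    have : z^2/2 + -z^2/2 = 0 := by ring
    rw [this, Complex.exp_zero]
  -- first derivative of yh
  have hyd : ∀ z : ℂ, HasDerivAt yh ((1 + z^2) * Complex.exp (z^2/2) * C z - c₁ * z) z := by
    intro z
    have h1 : HasDerivAt (fun z : ℂ => z * Complex.exp (z^2/2))
        (1 * Complex.exp (z^2/2) + z * (z * Complex.exp (z^2/2))) z :=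
      (hasDerivAt_id z).mul (hE z)
    have h2 := h1.mul (hCd z)
    have : yh = fun z => (z * Complex.exp (z^2/2)) * C z := rfl
    rw [this]
    refine h2.congr_deriv ?_
    linear_combination (-(c₁ * z)) * hEE z
  have hderiv1 : deriv yh = fun z => (1 + z^2) * Complex.exp (z^2/2) * C z - c₁ * z :=
    funext fun z => (hyd z).deriv
  -- second derivative
  have hyd2 : HasDerivAt (fun z => (1 + z^2) * Complex.exp (z^2/2) * C z - c₁ * z)
      ((3*zh + zh^3) * Complex.exp (zh^2/2) * C zh - c₁ * (2 + zh^2)) zh := by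
    have hq : HasDerivAt (fun z : ℂ => 1 + z^2) (2*zh) zh := by
      simpa using ((hasDerivAt_pow 2 zh).const_add 1)
    have h1 : HasDerivAt (fun z : ℂ => (1 + z^2) * Complex.exp (z^2/2))
        (2*zh * Complex.exp (zh^2/2) + (1 + zh^2) * (zh * Complex.exp (zh^2/2))) zh :=
      hq.mul (hE zh)
    have h2 := (h1.mul (hCd zh)).sub ((hasDerivAt_id zh).const_mul c₁)
    refine h2.congr_deriv ?_
    linear_combination (-(c₁ * (1 + zh^2))) * hEE zh
  have hderiv2 : deriv (deriv yh) zh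
      = (3*zh + zh^3) * Complex.exp (zh^2/2) * C zh - c₁ * (2 + zh^2) := by
    rw [hderiv1]
    exact hyd2.deriv
  rw [hderiv2, hderiv1]
  have hyh : yh zh = zh * Complex.exp (zh^2/2) * C zh := rfl
  rw [hyh]
  field_simp
  ring
end

section
/- For the Hamiltonian σ(z,w,ξ,η) = ξ³ - η²ξ - izη³ on T*(ℂ²), the curves η(τ) = η₀, ξ(τ) = iη₀³τ + ξ₀, z(τ) = -η₀⁶τ³ + 3iξ₀η₀³τ² + (3ξ₀² - η₀²)τ + z₀, w(τ) = (3iη₀⁸/4)τ⁴ + 3η₀⁵ξ₀τ³ + ((iη₀⁴ - 9iη₀²ξ₀²)/2)τ² - (2η₀ξ₀ + 3iη₀²z₀)τ + w₀ satisfy Hamilton's equations ż = ∂σ/∂ξ, ẇ = ∂σ/∂η, ξ̇ = -∂σ/∂z, η̇ = -∂σ/∂w, provided σ(z₀,w₀,ξ₀,η₀) = 0 (i.e., ξ₀³ - η₀²ξ₀ - iz₀η₀³ = 0). -/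
open Complex

theorem stmt_18 (η₀ ξ₀ z₀ w₀ : ℂ)
    (hσ : ξ₀^3 - η₀^2 * ξ₀ - Complex.I * z₀ * η₀^3 = 0) :
    let ηf : ℂ → ℂ := fun _ => η₀
    let ξf : ℂ → ℂ := fun τ => Complex.I * η₀^3 * τ + ξ₀
    let zf : ℂ → ℂ := fun τ =>
      -η₀^6 * τ^3 + 3 * Complex.I * ξ₀ * η₀^3 * τ^2 + (3 * ξ₀^2 - η₀^2) * τ + z₀
    let wf : ℂ → ℂ := fun τ =>
      (3 * Complex.I * η₀^8 / 4) * τ^4 + 3 * η₀^5 * ξ₀ * τ^3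
        + ((Complex.I * η₀^4 - 9 * Complex.I * η₀^2 * ξ₀^2) / 2) * τ^2
        - (2 * η₀ * ξ₀ + 3 * Complex.I * η₀^2 * z₀) * τ + w₀
    ∀ τ : ℂ,
      HasDerivAt zf (3 * (ξf τ)^2 - (ηf τ)^2) τ ∧
      HasDerivAt wf (-2 * (ηf τ) * (ξf τ) - 3 * Complex.I * (zf τ) * (ηf τ)^2) τ ∧
      HasDerivAt ξf (Complex.I * (ηf τ)^3) τ ∧
      HasDerivAt ηf 0 τ := by
  intro ηf ξf zf wf τ
  have h3 : HasDerivAt (fun τ : ℂ => τ^3) (3 * τ^2) τ := by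
    simpa using hasDerivAt_pow 3 τ
  have h2 : HasDerivAt (fun τ : ℂ => τ^2) (2 * τ) τ := by
    simpa using hasDerivAt_pow 2 τ
  have h4 : HasDerivAt (fun τ : ℂ => τ^4) (4 * τ^3) τ := by
    simpa using hasDerivAt_pow 4 τ
  have h1 : HasDerivAt (fun τ : ℂ => τ) 1 τ := hasDerivAt_id' τ
  refine ⟨?_, ?_, ?_, ?_⟩
  · have h := (((h3.const_mul (-η₀^6)).add (h2.const_mul (3 * Complex.I * ξ₀ * η₀^3))).add
      (h1.const_mul (3 * ξ₀^2 - η₀^2))).add_const z₀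
    simp only [zf, ξf, ηf]
    refine h.congr_deriv ?_
    ring_nf
    simp [Complex.I_sq]
    ring
  · have h := ((((h4.const_mul (3 * Complex.I * η₀^8 / 4)).add
      (h3.const_mul (3 * η₀^5 * ξ₀))).add
      (h2.const_mul ((Complex.I * η₀^4 - 9 * Complex.I * η₀^2 * ξ₀^2) / 2))).sub
      (h1.const_mul (2 * η₀ * ξ₀ + 3 * Complex.I * η₀^2 * z₀))).add_const w₀
    simp only [wf, ξf, ηf, zf]
    refine h.congr_deriv ?_
    ring_nf
    simp [Complex.I_sq]
    ring
  · have h := (h1.const_mul (Complex.I * η₀^3)).add_const ξ₀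
    simp only [ξf, ηf]
    refine h.congr_deriv ?_
    ring
  · exact hasDerivAt_const τ η₀
end
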